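/- Every multiarrangement (A,m) in dimension two is free: D(A,m) is a free S-module of rank 2 with a homogeneous basis, and its exponents (d_1,d_2) satisfy d_1 + d_2 = |m|. -/

import Mathlib

open MvPolynomial

/-- The linear form `α = Σ_j a_j x_j` with coefficient vector `a`. -/
noncomputable def linForm {K : Type} [Field K] {ℓ : ℕ} (a : Fin ℓ → K) :
    MvPolynomial (Fin ℓ) K :=
  ∑ j, C (a j) * X j

/-- Application `θ(α) = Σ_j a_j f_j` of a derivation `θ = Σ f_j ∂_{x_j}` to the linear
form with coefficient vector `a`, as a linear map in `θ`. -/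
noncomputable def appL {K : Type} [Field K] {ℓ : ℕ} (a : Fin ℓ → K) :
    (Fin ℓ → MvPolynomial (Fin ℓ) K) →ₗ[MvPolynomial (Fin ℓ) K] MvPolynomial (Fin ℓ) K :=
  ∑ j, (C (a j) : MvPolynomial (Fin ℓ) K) • (LinearMap.proj j :
    (Fin ℓ → MvPolynomial (Fin ℓ) K) →ₗ[MvPolynomial (Fin ℓ) K] MvPolynomial (Fin ℓ) K)

/-- The logarithmic derivation module `D(A,m)` of the multiarrangement with defining
forms `c i` and multiplicities `m i`. -/
noncomputable def Dlog {K : Type} [Field K] {ℓ : ℕ} {η : Type} (c : η → Fin ℓ → K)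
    (m : η → ℕ) :
    Submodule (MvPolynomial (Fin ℓ) K) (Fin ℓ → MvPolynomial (Fin ℓ) K) where
  carrier := {θ | ∀ i, linForm (c i) ^ m i ∣ appL (c i) θ}
  add_mem' := fun ha hb i => by rw [map_add]; exact dvd_add (ha i) (hb i)
  zero_mem' := fun i => by rw [map_zero]; exact dvd_zero _
  smul_mem' := fun s θ h i => by rw [map_smul, smul_eq_mul]; exact (h i).mul_left s


variable {K : Type} [Field K]

lemma appL_apply (a : Fin 2 → K) (θ : Fin 2 → MvPolynomial (Fin 2) K) :
    appL a θ = C (a 0) * θ 0 + C (a 1) * θ 1 := by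
  simp [appL, Fin.sum_univ_two, smul_eq_mul]

lemma linForm_two (a : Fin 2 → K) :
    linForm a = C (a 0) * X 0 + C (a 1) * X 1 := by
  simp [linForm, Fin.sum_univ_two]

lemma linForm_isHomogeneous {ℓ : ℕ} (a : Fin ℓ → K) : (linForm a).IsHomogeneous 1 := by
  apply IsHomogeneous.sum
  intro j _
  exact isHomogeneous_C_mul_X _ _

lemma coeff_linForm {ℓ : ℕ} (a : Fin ℓ → K) (j : Fin ℓ) :
    coeff (Finsupp.single j 1) (linForm a) = a j := by
  simp only [linForm, coeff_sum, coeff_C_mul, coeff_X']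
  rw [Finset.sum_eq_single j]
  · simp
  · intro j' _ hj'
    rw [if_neg, mul_zero]
    exact fun h => hj' (by simpa using (Finsupp.single_left_inj (by norm_num)).mp h)
  · simp

lemma linForm_ne_zero {ℓ : ℕ} {a : Fin ℓ → K} (ha : a ≠ 0) : linForm a ≠ 0 := by
  intro h
  apply ha
  funext j
  have := coeff_linForm a j
  rw [h, coeff_zero] at this
  simpa using this.symm


lemma isHomogeneous_of_mul_left {v w u : MvPolynomial (Fin 2) K} {k n : ℕ}
    (hv : v.IsHomogeneous k) (hw : w.IsHomogeneous n) (hv0 : v ≠ 0) (h : w = v * u) :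
    u.IsHomogeneous (n - k) := by
  have key : ∀ j, j ≠ n - k → homogeneousComponent j u = 0 := by
    intro j hj
    have hkj : k + j ≠ n := by omega
    by_cases hjr : j ≤ u.totalDegree
    · have hw' : (v * u).IsHomogeneous n := h ▸ hw
      have h1 : homogeneousComponent (k + j) (v * u) = 0 := by
        rw [homogeneousComponent_of_mem ((mem_homogeneousSubmodule _ _).mpr hw'),
          if_neg hkj]
      have hw2 : v * u = ∑ i ∈ Finset.range (u.totalDegree + 1),
          v * homogeneousComponent i u := by
        rw [← Finset.mul_sum, sum_homogeneousComponent]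
      have h2 : homogeneousComponent (k + j) (v * u)
          = ∑ i ∈ Finset.range (u.totalDegree + 1),
            homogeneousComponent (k + j) (v * homogeneousComponent i u) := by
        rw [hw2, map_sum]
      have h3 : ∀ i ∈ Finset.range (u.totalDegree + 1),
          homogeneousComponent (k + j) (v * homogeneousComponent i u)
            = if k + j = k + i then v * homogeneousComponent i u else 0 := by
        intro i _
        exact homogeneousComponent_of_mem ((mem_homogeneousSubmodule _ _).mpr
          (hv.mul (homogeneousComponent_isHomogeneous i u)))
      rw [Finset.sum_congr rfl h3, Finset.sum_eq_single j
        (fun i _ hij => by rw [if_neg (fun hcon => hij (by omega))])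
        (fun hj' => absurd (Finset.mem_range.mpr (by omega)) hj'),
        if_pos rfl] at h2
      rw [h1] at h2
      rcases mul_eq_zero.mp h2.symm with h' | h'
      · exact absurd h' hv0
      · exact h'
    · exact homogeneousComponent_eq_zero _ _ (by omega)
  intro d hd
  have hcomp : coeff d (homogeneousComponent d.degree u) ≠ 0 := by
    rw [coeff_homogeneousComponent, if_pos rfl]
    exact hd
  by_contra hne
  have : d.degree ≠ n - k := by
    intro h'
    apply hne
    rw [← h']
    simp [Finsupp.degree, Finsupp.weight_apply, Finsupp.sum]
    rfl
  rw [key _ this, coeff_zero] at hcomp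
  exact hcomp rfl


lemma degree_fin2 (s : Fin 2 →₀ ℕ) : (Finsupp.weight (1 : Fin 2 → ℕ)) s = s 0 + s 1 := by
  rw [Finsupp.weight_apply, Finsupp.sum_fintype _ _ (by simp), Fin.sum_univ_two]
  simp

/-- Decomposition of a homogeneous polynomial: `u = c·X1^n + X0·v`. -/
lemma homog_decomp {u : MvPolynomial (Fin 2) K} {n : ℕ} (hu : u.IsHomogeneous n) :
    ∃ (cst : K) (v : MvPolynomial (Fin 2) K), u = C cst * X 1 ^ n + X 0 * v := by
  classical
  set t0 : Fin 2 →₀ ℕ := Finsupp.single 1 n with ht0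
  refine ⟨coeff t0 u, ∑ s ∈ u.support.erase t0,
    monomial (s - Finsupp.single 0 1) (coeff s u), ?_⟩
  have hmono : C (coeff t0 u) * X 1 ^ n = monomial t0 (coeff t0 u) := by
    rw [X_pow_eq_monomial, C_mul_monomial, mul_one]
  have hs0 : ∀ s ∈ u.support.erase t0, Finsupp.single 0 1 ≤ s := by
    intro s hs
    obtain ⟨hne, hmem⟩ := Finset.mem_erase.mp hs
    have hdeg := hu (mem_support_iff.mp hmem)
    rw [degree_fin2] at hdeg
    rw [Finsupp.single_le_iff]
    by_contra h
    apply hne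
    have h0 : s 0 = 0 := by omega
    have h1 : s 1 = n := by omega
    ext j
    fin_cases j
    · simpa [ht0] using h0
    · simpa [ht0] using h1
  have hXv : X 0 * (∑ s ∈ u.support.erase t0,
      monomial (s - Finsupp.single 0 1) (coeff s u))
      = ∑ s ∈ u.support.erase t0, monomial s (coeff s u) := by
    rw [Finset.mul_sum]
    refine Finset.sum_congr rfl fun s hs => ?_
    rw [X, monomial_mul, one_mul, add_tsub_cancel_of_le (hs0 s hs)]
  rw [hmono, hXv]
  by_cases hmem : t0 ∈ u.support
  · rw [Finset.add_sum_erase _ (fun s => monomial s (coeff s u)) hmem]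
    exact (as_sum u)
  · rw [Finset.erase_eq_of_notMem hmem, notMem_support_iff.mp hmem, monomial_zero, zero_add]
    exact (as_sum u)

lemma exists_equiv {a : Fin 2 → K} (ha : a ≠ 0) :
    ∃ φ ψ : MvPolynomial (Fin 2) K →ₐ[K] MvPolynomial (Fin 2) K,
      (∀ p, ψ (φ p) = p) ∧ (∀ p, φ (ψ p) = p) ∧ ψ (X 0) = linForm a ∧
      (∀ p (n : ℕ), p.IsHomogeneous n → (φ p).IsHomogeneous n) ∧
      (∀ p (n : ℕ), p.IsHomogeneous n → (ψ p).IsHomogeneous n) := by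
  obtain ⟨A', B', hAB⟩ : ∃ A' B', a 0 * A' + a 1 * B' = 1 := by
    by_cases h0 : a 0 = 0
    · have h1 : a 1 ≠ 0 := by
        intro h1; apply ha; funext j; fin_cases j <;> simp [h0, h1]
      exact ⟨0, (a 1)⁻¹, by field_simp; ring⟩
    · exact ⟨(a 0)⁻¹, 0, by field_simp; ring⟩
  have hC : (C (a 0) * C A' + C (a 1) * C B' : MvPolynomial (Fin 2) K) = 1 := by
    rw [← map_mul, ← map_mul, ← map_add, hAB, map_one]
  set w₁ : Fin 2 → MvPolynomial (Fin 2) K :=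
    ![C A' * X 0 + C (a 1) * X 1, C B' * X 0 - C (a 0) * X 1] with hw₁
  set w₂ : Fin 2 → MvPolynomial (Fin 2) K :=
    ![C (a 0) * X 0 + C (a 1) * X 1, C B' * X 0 - C A' * X 1] with hw₂
  have hφ0 : aeval w₁ (X 0 : MvPolynomial (Fin 2) K) = C A' * X 0 + C (a 1) * X 1 := aeval_X w₁ 0
  have hφ1 : aeval w₁ (X 1 : MvPolynomial (Fin 2) K) = C B' * X 0 - C (a 0) * X 1 := aeval_X w₁ 1
  have hψ0 : aeval w₂ (X 0 : MvPolynomial (Fin 2) K) = C (a 0) * X 0 + C (a 1) * X 1 := aeval_X w₂ 0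
  have hψ1 : aeval w₂ (X 1 : MvPolynomial (Fin 2) K) = C B' * X 0 - C A' * X 1 := aeval_X w₂ 1
  have haC : ∀ (w : Fin 2 → MvPolynomial (Fin 2) K) (r : K),
      aeval w (C r : MvPolynomial (Fin 2) K) = C r := fun w r => aeval_C w r
  have hcomp1 : (aeval w₂).comp (aeval w₁) = AlgHom.id K (MvPolynomial (Fin 2) K) := by
    apply MvPolynomial.algHom_ext
    intro i
    fin_cases i
    · show aeval w₂ (aeval w₁ (X 0 : MvPolynomial (Fin 2) K)) = X 0
      rw [hφ0, map_add, map_mul, map_mul, haC, haC, hψ0, hψ1]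
      linear_combination (X (0 : Fin 2) : MvPolynomial (Fin 2) K) * hC
    · show aeval w₂ (aeval w₁ (X 1 : MvPolynomial (Fin 2) K)) = X 1
      rw [hφ1, map_sub, map_mul, map_mul, haC, haC, hψ0, hψ1]
      linear_combination (X (1 : Fin 2) : MvPolynomial (Fin 2) K) * hC
  have hcomp2 : (aeval w₁).comp (aeval w₂) = AlgHom.id K (MvPolynomial (Fin 2) K) := by
    apply MvPolynomial.algHom_ext
    intro i
    fin_cases i
    · show aeval w₁ (aeval w₂ (X 0 : MvPolynomial (Fin 2) K)) = X 0
      rw [hψ0, map_add, map_mul, map_mul, haC, haC, hφ0, hφ1]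
      linear_combination (X (0 : Fin 2) : MvPolynomial (Fin 2) K) * hC
    · show aeval w₁ (aeval w₂ (X 1 : MvPolynomial (Fin 2) K)) = X 1
      rw [hψ1, map_sub, map_mul, map_mul, haC, haC, hφ0, hφ1]
      linear_combination (X (1 : Fin 2) : MvPolynomial (Fin 2) K) * hC
  have hhom : ∀ (w : Fin 2 → MvPolynomial (Fin 2) K),
      (∀ i, (w i).IsHomogeneous 1) →
      ∀ (p : MvPolynomial (Fin 2) K) (n : ℕ), p.IsHomogeneous n → (aeval w p).IsHomogeneous n := by
    intro w hw p n hp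
    simpa using hp.aeval _ hw
  refine ⟨aeval w₁, aeval w₂,
    fun p => by simpa using DFunLike.congr_fun hcomp1 p,
    fun p => by simpa using DFunLike.congr_fun hcomp2 p,
    by rw [hψ0, linForm_two], hhom w₁ ?_, hhom w₂ ?_⟩
  · intro i
    fin_cases i
    · exact (isHomogeneous_C_mul_X _ _).add (isHomogeneous_C_mul_X _ _)
    · exact (isHomogeneous_C_mul_X _ _).sub (isHomogeneous_C_mul_X _ _)
  · intro i
    fin_cases i
    · exact (isHomogeneous_C_mul_X _ _).add (isHomogeneous_C_mul_X _ _)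
    · exact (isHomogeneous_C_mul_X _ _).sub (isHomogeneous_C_mul_X _ _)

lemma prime_X0 : Prime (X 0 : MvPolynomial (Fin 2) K) := by
  have h : Prime ((finSuccEquiv K 1) (X 0)) := by
    rw [finSuccEquiv_X_zero]
    exact Polynomial.prime_X
  exact (MulEquiv.prime_iff (finSuccEquiv K 1).toRingEquiv.toMulEquiv).mp h

lemma prime_linForm {a : Fin 2 → K} (ha : a ≠ 0) : Prime (linForm a) := by
  obtain ⟨φ, ψ, hψφ, hφψ, hψX, -, -⟩ := exists_equiv ha
  have hφα : φ (linForm a) = X 0 := by rw [← hψX, hφψ]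
  have dvdφ : ∀ q, linForm a ∣ q ↔ (X 0 : MvPolynomial (Fin 2) K) ∣ φ q := by
    intro q
    constructor
    · rintro ⟨t, rfl⟩; exact ⟨φ t, by rw [map_mul, hφα]⟩
    · rintro ⟨t, ht⟩; exact ⟨ψ t, by rw [← hψφ q, ht, map_mul, hψX]⟩
  refine ⟨linForm_ne_zero ha, fun h => ?_, fun x y hxy => ?_⟩
  · have : IsUnit (X 0 : MvPolynomial (Fin 2) K) := by
      have := h.map φ; rwa [hφα] at this
    exact prime_X0.not_unit this
  · rcases prime_X0.2.2 (φ x) (φ y)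
      (by rw [← map_mul]; exact (dvdφ _).mp hxy) with h | h
    · exact Or.inl ((dvdφ _).mpr h)
    · exact Or.inr ((dvdφ _).mpr h)

lemma exists_h {a : Fin 2 → K} (ha : a ≠ 0) {u₁ u₂ : MvPolynomial (Fin 2) K} {e₁ e₂ : ℕ}
    (h₁ : u₁.IsHomogeneous e₁) (h₂ : u₂.IsHomogeneous e₂)
    (hnd : ¬ linForm a ∣ u₁) (he : e₁ ≤ e₂) :
    ∃ h : MvPolynomial (Fin 2) K, h.IsHomogeneous (e₂ - e₁) ∧ linForm a ∣ u₂ - h * u₁ := by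
  obtain ⟨φ, ψ, hψφ, hφψ, hψX, hφh, hψh⟩ := exists_equiv ha
  have hφα : φ (linForm a) = X 0 := by rw [← hψX, hφψ]
  have dvdφ : ∀ q, linForm a ∣ q ↔ (X 0 : MvPolynomial (Fin 2) K) ∣ φ q := by
    intro q
    constructor
    · rintro ⟨t, rfl⟩; exact ⟨φ t, by rw [map_mul, hφα]⟩
    · rintro ⟨t, ht⟩; exact ⟨ψ t, by rw [← hψφ q, ht, map_mul, hψX]⟩
  obtain ⟨c₁, v₁, hw₁⟩ := homog_decomp (hφh u₁ e₁ h₁)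
  obtain ⟨c₂, v₂, hw₂⟩ := homog_decomp (hφh u₂ e₂ h₂)
  have hc₁ : c₁ ≠ 0 := by
    intro h0
    apply hnd
    apply (dvdφ u₁).mpr
    rw [hw₁, h0, map_zero, zero_mul, zero_add]
    exact Dvd.intro _ rfl
  have hpow : (X 1 : MvPolynomial (Fin 2) K) ^ (e₂ - e₁) * X 1 ^ e₁ = X 1 ^ e₂ := by
    rw [← pow_add]; congr 1; omega
  have hcc : (C (c₂ / c₁) * C c₁ : MvPolynomial (Fin 2) K) = C c₂ := by
    rw [← map_mul, div_mul_cancel₀ _ hc₁]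
  have hdiv : (X 0 : MvPolynomial (Fin 2) K)
      ∣ φ u₂ - (C (c₂ / c₁) * X 1 ^ (e₂ - e₁)) * φ u₁ := by
    refine ⟨v₂ - C (c₂ / c₁) * X 1 ^ (e₂ - e₁) * v₁, ?_⟩
    rw [hw₁, hw₂]
    linear_combination (-((X 1 : MvPolynomial (Fin 2) K) ^ (e₂ - e₁) * X 1 ^ e₁)) * hcc
      - C c₂ * hpow
  refine ⟨ψ (C (c₂ / c₁) * X 1 ^ (e₂ - e₁)), ?_, ?_⟩
  · exact hψh _ _ (isHomogeneous_C_mul_X_pow _ _ _)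
  · obtain ⟨t, ht⟩ := hdiv
    have : linForm a ∣ ψ (φ u₂ - (C (c₂ / c₁) * X 1 ^ (e₂ - e₁)) * φ u₁) :=
      ⟨ψ t, by rw [ht, map_mul, hψX]⟩
    rwa [map_sub, map_mul, hψφ, hψφ] at this

lemma dvd_linForm {a b : Fin 2 → K} (ha : a ≠ 0) (h : linForm a ∣ linForm b) :
    ∃ t : K, b = t • a := by
  obtain ⟨w, hw⟩ := h
  by_cases hb : linForm b = 0
  · refine ⟨0, ?_⟩
    funext j
    have h2 := coeff_linForm b j
    rw [hb, coeff_zero] at h2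
    simp [← h2]
  · have hw0 : w ≠ 0 := by rintro rfl; rw [mul_zero] at hw; exact hb hw
    have hwh : w.IsHomogeneous (1 - 1) :=
      isHomogeneous_of_mul_left (linForm_isHomogeneous a)
        (hw ▸ linForm_isHomogeneous b) (linForm_ne_zero ha) hw
    rw [Nat.sub_self] at hwh
    obtain ⟨t, ht⟩ : ∃ t, w = C t := by
      refine ⟨coeff 0 w, MvPolynomial.ext _ _ fun d => ?_⟩
      rw [coeff_C]
      by_cases hd : (0 : Fin 2 →₀ ℕ) = d
      · rw [if_pos hd, ← hd]
      · rw [if_neg hd]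
        by_contra hc
        have hdeg := hwh hc
        rw [degree_fin2] at hdeg
        have h0 : d 0 = 0 := by omega
        have h1 : d 1 = 0 := by omega
        apply hd
        ext j
        fin_cases j
        · simp only [Finsupp.coe_zero, Pi.zero_apply]
          exact h0.symm
        · simp only [Finsupp.coe_zero, Pi.zero_apply]
          exact h1.symm
    refine ⟨t, ?_⟩
    funext j
    have h2 := coeff_linForm b j
    rw [hw, ht, mul_comm, coeff_C_mul, coeff_linForm] at h2
    simp [← h2, mul_comm]

def Good {η : Type} [Fintype η] (c : η → Fin 2 → K) (m : η → ℕ)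
    (θ₁ θ₂ : Fin 2 → MvPolynomial (Fin 2) K) (d₁ d₂ : ℕ) : Prop :=
  θ₁ ∈ Dlog c m ∧ θ₂ ∈ Dlog c m ∧
  (∀ j, (θ₁ j).IsHomogeneous d₁) ∧ (∀ j, (θ₂ j).IsHomogeneous d₂) ∧
  (Dlog c m ≤ Submodule.span (MvPolynomial (Fin 2) K) {θ₁, θ₂}) ∧
  ∃ u : K, u ≠ 0 ∧
    θ₁ 0 * θ₂ 1 - θ₁ 1 * θ₂ 0 = C u * ∏ i, linForm (c i) ^ m i

lemma Good.swap {η : Type} [Fintype η] {c : η → Fin 2 → K} {m : η → ℕ}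
    {θ₁ θ₂ : Fin 2 → MvPolynomial (Fin 2) K} {d₁ d₂ : ℕ}
    (h : Good c m θ₁ θ₂ d₁ d₂) : Good c m θ₂ θ₁ d₂ d₁ := by
  obtain ⟨h1, h2, h3, h4, h5, u, hu, hdet⟩ := h
  exact ⟨h2, h1, h4, h3, by rwa [Set.pair_comm], -u, neg_ne_zero.mpr hu,
    by rw [map_neg]; linear_combination -hdet⟩

lemma mem_Dlog {η : Type} {c : η → Fin 2 → K} {m : η → ℕ}
    {θ : Fin 2 → MvPolynomial (Fin 2) K} :
    θ ∈ Dlog c m ↔ ∀ i, linForm (c i) ^ m i ∣ appL (c i) θ := Iff.rfl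

lemma Dlog_mono {η : Type} {c : η → Fin 2 → K} {m m' : η → ℕ} (h : ∀ i, m' i ≤ m i) :
    Dlog c m ≤ Dlog c m' := fun _ hθ i => dvd_trans (pow_dvd_pow _ (h i)) (hθ i)

lemma step1 {η : Type} [Fintype η] [DecidableEq η] {c : η → Fin 2 → K} {m : η → ℕ}
    {i0 : η} (h0 : 1 ≤ m i0)
    {θ₁ θ₂ : Fin 2 → MvPolynomial (Fin 2) K} {d₁ d₂ : ℕ}
    (hg : Good c (Function.update m i0 (m i0 - 1)) θ₁ θ₂ d₁ d₂)
    {u₁ u₂ h : MvPolynomial (Fin 2) K}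
    (hu₁ : appL (c i0) θ₁ = linForm (c i0) ^ (m i0 - 1) * u₁)
    (hu₂ : appL (c i0) θ₂ = linForm (c i0) ^ (m i0 - 1) * u₂)
    (hne0 : c i0 ≠ 0)
    (hnd1 : ¬ linForm (c i0) ∣ u₁)
    (hh : ∀ j, (θ₂ j - h * θ₁ j).IsHomogeneous d₂)
    (hdvd : linForm (c i0) ∣ u₂ - h * u₁) :
    Good c m (fun j => linForm (c i0) * θ₁ j) (fun j => θ₂ j - h * θ₁ j) (d₁ + 1) d₂ := by
  obtain ⟨hm1, hm2, hh1, hh2, hsp, u, hu0, hdet⟩ := hg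
  have hαp : Prime (linForm (c i0)) := prime_linForm hne0
  have hki : m i0 = (m i0 - 1) + 1 := by omega
  have hupd : ∀ i : η, i ≠ i0 → Function.update m i0 (m i0 - 1) i = m i :=
    fun i hi => Function.update_of_ne hi _ _
  have hupd0 : Function.update m i0 (m i0 - 1) i0 = m i0 - 1 :=
    Function.update_self _ _ _
  have hps : linForm (c i0) ^ m i0 = linForm (c i0) ^ (m i0 - 1) * linForm (c i0) := by
    conv_lhs => rw [hki, pow_succ]
  have hmem1 : (fun j => linForm (c i0) * θ₁ j) ∈ Dlog c m := by
    intro i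
    have heq : appL (c i) (fun j => linForm (c i0) * θ₁ j)
        = linForm (c i0) * appL (c i) θ₁ := by
      rw [appL_apply, appL_apply]; ring
    rw [heq]
    by_cases hi : i = i0
    · rw [hi, hu₁, hps]
      exact ⟨u₁, by ring⟩
    · have hd := hm1 i
      rw [hupd i hi] at hd
      exact hd.mul_left _
  have hmem2 : (fun j => θ₂ j - h * θ₁ j) ∈ Dlog c m := by
    intro i
    have heq : appL (c i) (fun j => θ₂ j - h * θ₁ j)
        = appL (c i) θ₂ - h * appL (c i) θ₁ := by
      rw [appL_apply, appL_apply, appL_apply]; ring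
    rw [heq]
    by_cases hi : i = i0
    · obtain ⟨w, hw⟩ := hdvd
      rw [hi, hu₁, hu₂, hps]
      exact ⟨w, by linear_combination (linForm (c i0) ^ (m i0 - 1)) * hw⟩
    · have hd2 := hm2 i
      have hd1 := hm1 i
      rw [hupd i hi] at hd1 hd2
      exact dvd_sub hd2 (hd1.mul_left h)
  have hspan : Dlog c m ≤ Submodule.span (MvPolynomial (Fin 2) K)
      {(fun j => linForm (c i0) * θ₁ j), (fun j => θ₂ j - h * θ₁ j)} := by
    intro θ hθ
    have hθ' : θ ∈ Dlog c (Function.update m i0 (m i0 - 1)) := by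
      refine Dlog_mono (fun i => ?_) hθ
      by_cases hi : i = i0
      · subst hi; rw [hupd0]; omega
      · rw [hupd i hi]
    obtain ⟨f, g, hfg⟩ := Submodule.mem_span_pair.mp (hsp hθ')
    have happθ : appL (c i0) θ = f * appL (c i0) θ₁ + g * appL (c i0) θ₂ := by
      rw [← hfg, map_add, map_smul, map_smul, smul_eq_mul, smul_eq_mul]
    have h6 := hθ i0
    rw [hki, happθ, hu₁, hu₂] at h6
    have h7 : f * (linForm (c i0) ^ (m i0 - 1) * u₁) + g * (linForm (c i0) ^ (m i0 - 1) * u₂)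
        = linForm (c i0) ^ (m i0 - 1) * (f * u₁ + g * u₂) := by ring
    rw [h7, pow_succ] at h6
    have hdc : linForm (c i0) ∣ f * u₁ + g * u₂ :=
      (mul_dvd_mul_iff_left (pow_ne_zero (m i0 - 1) hαp.ne_zero)).mp h6
    have h3 : linForm (c i0) ∣ (f + g * h) * u₁ := by
      have h4 : (f + g * h) * u₁ = (f * u₁ + g * u₂) - g * (u₂ - h * u₁) := by ring
      rw [h4]
      exact dvd_sub hdc (hdvd.mul_left g)
    rcases hαp.dvd_mul.mp h3 with h5 | h5
    · obtain ⟨s, hs⟩ := h5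
      refine Submodule.mem_span_pair.mpr ⟨s, g, ?_⟩
      funext j
      have hj := congrFun hfg j
      simp only [Pi.add_apply, Pi.smul_apply, smul_eq_mul] at hj ⊢
      linear_combination (-(θ₁ j)) * hs + hj
    · exact absurd h5 hnd1
  refine ⟨hmem1, hmem2, ?_, hh, hspan, u, hu0, ?_⟩
  · intro j
    have hd := (linForm_isHomogeneous (c i0)).mul (hh1 j)
    rwa [add_comm] at hd
  · have h8 : ∀ i ∈ Finset.univ.erase i0,
        linForm (c i) ^ (Function.update m i0 (m i0 - 1) i) = linForm (c i) ^ m i :=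
      fun i hi => by rw [hupd i (Finset.ne_of_mem_erase hi)]
    have hprod : (∏ i, linForm (c i) ^ m i)
        = linForm (c i0) * ∏ i, linForm (c i) ^ (Function.update m i0 (m i0 - 1) i) := by
      rw [← Finset.mul_prod_erase Finset.univ (fun i => linForm (c i) ^ m i)
            (Finset.mem_univ i0),
          ← Finset.mul_prod_erase Finset.univ
            (fun i => linForm (c i) ^ (Function.update m i0 (m i0 - 1) i))
            (Finset.mem_univ i0),
          Finset.prod_congr rfl h8, hupd0]
      rw [hps]
      ring
    rw [hprod]
    linear_combination (linForm (c i0)) * hdet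

lemma step {η : Type} [Fintype η] [DecidableEq η] {c : η → Fin 2 → K}
    (hne : ∀ i, c i ≠ 0)
    (hdist : ∀ i i', i ≠ i' → ∀ t : K, c i ≠ t • c i')
    {m : η → ℕ} {i0 : η} (h0 : 1 ≤ m i0)
    {θ₁ θ₂ : Fin 2 → MvPolynomial (Fin 2) K} {d₁ d₂ : ℕ}
    (hg : Good c (Function.update m i0 (m i0 - 1)) θ₁ θ₂ d₁ d₂) :
    ∃ θ₁' θ₂' d₁' d₂', Good c m θ₁' θ₂' d₁' d₂' ∧ d₁' + d₂' = d₁ + d₂ + 1 := by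
  obtain ⟨hm1, hm2, hh1, hh2, hsp, u, hu0, hdet⟩ := hg
  have hg' : Good c (Function.update m i0 (m i0 - 1)) θ₁ θ₂ d₁ d₂ :=
    ⟨hm1, hm2, hh1, hh2, hsp, u, hu0, hdet⟩
  have hαne : linForm (c i0) ≠ 0 := linForm_ne_zero (hne i0)
  have hαp : Prime (linForm (c i0)) := prime_linForm (hne i0)
  have hupd0 : Function.update m i0 (m i0 - 1) i0 = m i0 - 1 :=
    Function.update_self _ _ _
  obtain ⟨u₁, hu₁⟩ : linForm (c i0) ^ (m i0 - 1) ∣ appL (c i0) θ₁ := by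
    have hd := hm1 i0; rwa [hupd0] at hd
  obtain ⟨u₂, hu₂⟩ : linForm (c i0) ^ (m i0 - 1) ∣ appL (c i0) θ₂ := by
    have hd := hm2 i0; rwa [hupd0] at hd
  have hpowh : (linForm (c i0) ^ (m i0 - 1)).IsHomogeneous (m i0 - 1) := by
    have hd := (linForm_isHomogeneous (c i0)).pow (m i0 - 1)
    rwa [one_mul] at hd
  have hp₁ : (appL (c i0) θ₁).IsHomogeneous d₁ := by
    rw [appL_apply]
    exact ((hh1 0).C_mul _).add ((hh1 1).C_mul _)
  have hp₂ : (appL (c i0) θ₂).IsHomogeneous d₂ := by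
    rw [appL_apply]
    exact ((hh2 0).C_mul _).add ((hh2 1).C_mul _)
  have hU₁ : u₁.IsHomogeneous (d₁ - (m i0 - 1)) :=
    isHomogeneous_of_mul_left hpowh hp₁ (pow_ne_zero _ hαne) hu₁
  have hU₂ : u₂.IsHomogeneous (d₂ - (m i0 - 1)) :=
    isHomogeneous_of_mul_left hpowh hp₂ (pow_ne_zero _ hαne) hu₂
  -- if both u₁, u₂ divisible by α: contradiction with the determinant formula
  have hnotboth : ¬ (linForm (c i0) ∣ u₁ ∧ linForm (c i0) ∣ u₂) := by
    rintro ⟨⟨w₁, hw₁⟩, ⟨w₂, hw₂⟩⟩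
    obtain ⟨r, s, hrs⟩ : ∃ r s : K, c i0 0 * s - c i0 1 * r = 1 := by
      by_cases hc0 : c i0 0 = 0
      · have hc1 : c i0 1 ≠ 0 := by
          intro hc1; apply hne i0; funext j; fin_cases j <;> simp [hc0, hc1]
        exact ⟨-(c i0 1)⁻¹, 0, by field_simp; ring⟩
      · exact ⟨0, (c i0 0)⁻¹, by field_simp; ring⟩
    have hCrs : (C (c i0 0) * C s - C (c i0 1) * C r : MvPolynomial (Fin 2) K) = 1 := by
      rw [← map_mul, ← map_mul, ← map_sub, hrs, map_one]
    have hdetpq : appL (c i0) θ₁ * (C r * θ₂ 0 + C s * θ₂ 1)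
        - appL (c i0) θ₂ * (C r * θ₁ 0 + C s * θ₁ 1)
        = θ₁ 0 * θ₂ 1 - θ₁ 1 * θ₂ 0 := by
      rw [appL_apply, appL_apply]
      linear_combination (θ₁ 0 * θ₂ 1 - θ₁ 1 * θ₂ 0) * hCrs
    have hdvddet : linForm (c i0) ^ (m i0 - 1 + 1) ∣ θ₁ 0 * θ₂ 1 - θ₁ 1 * θ₂ 0 := by
      rw [← hdetpq]
      apply dvd_sub
      · refine Dvd.dvd.mul_right ⟨w₁, ?_⟩ _
        rw [hu₁, hw₁, pow_succ]; ring
      · refine Dvd.dvd.mul_right ⟨w₂, ?_⟩ _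
        rw [hu₂, hw₂, pow_succ]; ring
    rw [hdet] at hdvddet
    have hsplit : C u * (∏ i, linForm (c i) ^ (Function.update m i0 (m i0 - 1) i))
        = linForm (c i0) ^ (m i0 - 1) *
          (C u * ∏ i ∈ Finset.univ.erase i0,
            linForm (c i) ^ (Function.update m i0 (m i0 - 1) i)) := by
      rw [← Finset.mul_prod_erase Finset.univ
            (fun i => linForm (c i) ^ (Function.update m i0 (m i0 - 1) i))
            (Finset.mem_univ i0), hupd0]
      ring
    rw [hsplit, pow_succ] at hdvddet
    have hdvd2 : linForm (c i0) ∣ C u * ∏ i ∈ Finset.univ.erase i0,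
        linForm (c i) ^ (Function.update m i0 (m i0 - 1) i) :=
      (mul_dvd_mul_iff_left (pow_ne_zero (m i0 - 1) hαne)).mp hdvddet
    rcases hαp.dvd_mul.mp hdvd2 with hd | hd
    · exact hαp.not_unit (isUnit_of_dvd_unit hd ((isUnit_iff_ne_zero.mpr hu0).map C))
    · obtain ⟨i, hi, hdi⟩ := hαp.exists_mem_finset_dvd hd
      have hii0 : i ≠ i0 := Finset.ne_of_mem_erase hi
      obtain ⟨t, ht⟩ := dvd_linForm (hne i0) (hαp.dvd_of_dvd_pow hdi)
      exact hdist i i0 hii0 t ht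
  -- the two symmetric main cases
  by_cases hd1 : linForm (c i0) ∣ u₁
  · have hd2 : ¬ linForm (c i0) ∣ u₂ := fun hd2 => hnotboth ⟨hd1, hd2⟩
    have hS := step1 h0 hg'.swap hu₂ hu₁ (hne i0) hd2 (h := 0)
      (fun j => by simpa using hh1 j) (by simpa using hd1)
    exact ⟨_, _, d₂ + 1, d₁, hS, by omega⟩
  · by_cases hd2 : linForm (c i0) ∣ u₂
    · have hS := step1 h0 hg' hu₁ hu₂ (hne i0) hd1 (h := 0)
        (fun j => by simpa using hh2 j) (by simpa using hd2)
      exact ⟨_, _, d₁ + 1, d₂, hS, by omega⟩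
    · -- neither divisible; compare degrees
      have hne₁ : u₁ ≠ 0 := fun hz => hd1 (hz ▸ dvd_zero _)
      have hne₂ : u₂ ≠ 0 := fun hz => hd2 (hz ▸ dvd_zero _)
      have hk₁ : m i0 - 1 ≤ d₁ := by
        have h5 : (appL (c i0) θ₁).IsHomogeneous ((m i0 - 1) + (d₁ - (m i0 - 1))) := by
          rw [hu₁]; exact hpowh.mul hU₁
        have h6 : appL (c i0) θ₁ ≠ 0 := by
          rw [hu₁]; exact mul_ne_zero (pow_ne_zero _ hαne) hne₁
        have e1 := hp₁.totalDegree h6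
        have e2 := h5.totalDegree h6
        omega
      have hk₂ : m i0 - 1 ≤ d₂ := by
        have h5 : (appL (c i0) θ₂).IsHomogeneous ((m i0 - 1) + (d₂ - (m i0 - 1))) := by
          rw [hu₂]; exact hpowh.mul hU₂
        have h6 : appL (c i0) θ₂ ≠ 0 := by
          rw [hu₂]; exact mul_ne_zero (pow_ne_zero _ hαne) hne₂
        have e1 := hp₂.totalDegree h6
        have e2 := h5.totalDegree h6
        omega
      rcases le_total d₁ d₂ with hdd | hdd
      · obtain ⟨h, hH, hHdvd⟩ := exists_h (hne i0) hU₁ hU₂ hd1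
          (Nat.sub_le_sub_right hdd _)
        have hzz : (d₂ - (m i0 - 1)) - (d₁ - (m i0 - 1)) + d₁ = d₂ := by omega
        have hS := step1 h0 hg' hu₁ hu₂ (hne i0) hd1
          (fun j => (hh2 j).sub (hzz ▸ hH.mul (hh1 j))) hHdvd
        exact ⟨_, _, d₁ + 1, d₂, hS, by omega⟩
      · obtain ⟨h, hH, hHdvd⟩ := exists_h (hne i0) hU₂ hU₁ hd2
          (Nat.sub_le_sub_right hdd _)
        have hzz : (d₁ - (m i0 - 1)) - (d₂ - (m i0 - 1)) + d₂ = d₁ := by omega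
        have hS := step1 h0 hg'.swap hu₂ hu₁ (hne i0) hd2
          (fun j => (hh1 j).sub (hzz ▸ hH.mul (hh2 j))) hHdvd
        exact ⟨_, _, d₂ + 1, d₁, hS, by omega⟩

lemma main {η : Type} [Fintype η] {c : η → Fin 2 → K}
    (hne : ∀ i, c i ≠ 0)
    (hdist : ∀ i i', i ≠ i' → ∀ t : K, c i ≠ t • c i') :
    ∀ (n : ℕ) (m : η → ℕ), (∑ i, m i) = n →
    ∃ θ₁ θ₂ d₁ d₂, Good c m θ₁ θ₂ d₁ d₂ ∧ d₁ + d₂ = n := by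
  classical
  intro n
  induction n with
  | zero =>
    intro m hm
    have hm0 : ∀ i, m i = 0 := by
      intro i
      exact Finset.sum_eq_zero_iff.mp hm i (Finset.mem_univ i)
    refine ⟨![1, 0], ![0, 1], 0, 0, ⟨?_, ?_, ?_, ?_, ?_, 1, one_ne_zero, ?_⟩, rfl⟩
    · intro i; rw [hm0 i, pow_zero]; exact one_dvd _
    · intro i; rw [hm0 i, pow_zero]; exact one_dvd _
    · intro j
      fin_cases j
      · exact isHomogeneous_one _ _
      · exact isHomogeneous_zero _ _ _
    · intro j
      fin_cases j
      · exact isHomogeneous_zero _ _ _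
      · exact isHomogeneous_one _ _
    · intro θ _
      refine Submodule.mem_span_pair.mpr ⟨θ 0, θ 1, ?_⟩
      funext j
      fin_cases j <;> simp
    · simp [hm0]
  | succ n ih =>
    intro m hm
    obtain ⟨i0, hi0⟩ : ∃ i0, 1 ≤ m i0 := by
      by_contra hcon
      push_neg at hcon
      rw [Finset.sum_eq_zero (fun i _ => by have := hcon i; omega)] at hm
      omega
    have hm' : (∑ i, Function.update m i0 (m i0 - 1) i) = n := by
      rw [Finset.sum_update_of_mem (Finset.mem_univ i0)]
      have hs := Finset.add_sum_erase Finset.univ m (Finset.mem_univ i0)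
      rw [Finset.erase_eq] at hs
      omega
    obtain ⟨θ₁, θ₂, d₁, d₂, hg, hd⟩ := ih _ hm'
    obtain ⟨θ₁', θ₂', d₁', d₂', hg', hd'⟩ := step hne hdist hi0 hg
    exact ⟨θ₁', θ₂', d₁', d₂', hg', by omega⟩

theorem two_multiarrangement_free' {η : Type} [Fintype η]
    (c : η → Fin 2 → K)
    (hne : ∀ i, c i ≠ 0)
    (hdist : ∀ i i', i ≠ i' → ∀ t : K, c i ≠ t • c i')
    (m : η → ℕ) :
    ∃ (d : Fin 2 → ℕ) (b : Module.Basis (Fin 2) (MvPolynomial (Fin 2) K) (Dlog c m)),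
      (∀ i j, ((b i : Fin 2 → MvPolynomial (Fin 2) K) j).IsHomogeneous (d i)) ∧
      d 0 + d 1 = ∑ i, m i := by
  obtain ⟨θ₁, θ₂, d₁, d₂, ⟨h1, h2, hh1, hh2, hsp, u, hu0, hdet⟩, hsum⟩ :=
    main hne hdist (∑ i, m i) m rfl
  have hdet0 : θ₁ 0 * θ₂ 1 - θ₁ 1 * θ₂ 0 ≠ 0 := by
    rw [hdet]
    apply mul_ne_zero
    · intro hC
      apply hu0
      simpa using hC
    · rw [Finset.prod_ne_zero_iff]
      exact fun i _ => pow_ne_zero _ (linForm_ne_zero (hne i))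
  set v : Fin 2 → Dlog c m := ![⟨θ₁, h1⟩, ⟨θ₂, h2⟩] with hv
  have hli : LinearIndependent (MvPolynomial (Fin 2) K) v := by
    rw [Fintype.linearIndependent_iff]
    intro g hgsum
    rw [Fin.sum_univ_two] at hgsum
    have hamb : g 0 • θ₁ + g 1 • θ₂ = 0 := congrArg Subtype.val hgsum
    have e0 := congrFun hamb 0
    have e1 := congrFun hamb 1
    simp only [Pi.add_apply, Pi.smul_apply, smul_eq_mul, Pi.zero_apply] at e0 e1
    intro i
    fin_cases i
    · show g 0 = 0
      have hz : g 0 * (θ₁ 0 * θ₂ 1 - θ₁ 1 * θ₂ 0) = 0 := by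
        linear_combination θ₂ 1 * e0 - θ₂ 0 * e1
      rcases mul_eq_zero.mp hz with hz' | hz'
      · exact hz'
      · exact absurd hz' hdet0
    · show g 1 = 0
      have hz : g 1 * (θ₁ 0 * θ₂ 1 - θ₁ 1 * θ₂ 0) = 0 := by
        linear_combination θ₁ 0 * e1 - θ₁ 1 * e0
      rcases mul_eq_zero.mp hz with hz' | hz'
      · exact hz'
      · exact absurd hz' hdet0
  have hsp2 : ⊤ ≤ Submodule.span (MvPolynomial (Fin 2) K) (Set.range v) := by
    intro x _
    obtain ⟨f, g, hfg⟩ := Submodule.mem_span_pair.mp (hsp x.2)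
    have hx : f • v 0 + g • v 1 = x := Subtype.ext hfg
    rw [← hx]
    exact Submodule.add_mem _
      (Submodule.smul_mem _ _ (Submodule.subset_span ⟨0, rfl⟩))
      (Submodule.smul_mem _ _ (Submodule.subset_span ⟨1, rfl⟩))
  refine ⟨![d₁, d₂], Module.Basis.mk hli hsp2, ?_, ?_⟩
  · intro i j
    fin_cases i
    · rw [Module.Basis.mk_apply]
      exact hh1 j
    · rw [Module.Basis.mk_apply]
      exact hh2 j
  · show d₁ + d₂ = ∑ i, m i
    exact hsum

/-- **Every 2-multiarrangement is free.**  For a central multiarrangement `(A,m)` of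
distinct lines in `K^2`, the module `D(A,m)` is a free module of rank 2 with a
homogeneous basis, and the exponents `(d 0, d 1)` satisfy `d 0 + d 1 = |m|`. -/
theorem two_multiarrangement_free {K : Type} [Field K] [CharZero K] {η : Type} [Fintype η]
    (c : η → Fin 2 → K)
    (hne : ∀ i, c i ≠ 0)
    (hdist : ∀ i i', i ≠ i' → ∀ t : K, c i ≠ t • c i')
    (m : η → ℕ) :
    ∃ (d : Fin 2 → ℕ) (b : Module.Basis (Fin 2) (MvPolynomial (Fin 2) K) (Dlog c m)),
      (∀ i j, ((b i : Fin 2 → MvPolynomial (Fin 2) K) j).IsHomogeneous (d i)) ∧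
      d 0 + d 1 = ∑ i, m i :=
  two_multiarrangement_free' c hne hdist m
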